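/- Let α be a continuous action of a countable sofic group G on a compact metrizable space X with sofic approximation sequence Σ, let f, g : X → ℝ be continuous, and let s ∈ G. Then P_Σ(f + g∘α_s − g, X, G) = P_Σ(f, X, G), where (g∘α_s)(x) = g(sx) for x ∈ X. -/

import Mathlib

/-! Since `σ s` permutes `Fin d`, for a model `φ` the coboundary `g ∘ α s - g` sums to
`∑ a, (g (α s (φ a)) - g (φ (σ s a)))`. Uniform continuity of `g` together with a Chebyshev-type
bound shows this is at most `d * η` once `ρ₂(α s ∘ φ, φ ∘ σ s)` is small. So, after adding `s`
to `F` and shrinking `δ`, every weight for `f + g ∘ α s - g` is at most `exp (d * η)` times the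
corresponding weight for `f`, whence `P(f + g ∘ α s - g) ≤ P(f) + η`. The reverse inequality is
the same statement for `f + g ∘ α s - g` and `-g`. -/

open Filter MeasureTheory
open scoped Pointwise Classical BigOperators

namespace Sofic

structure ContAction (G : Type*) [Group G] (X : Type*) [TopologicalSpace X]
    (α : G → X → X) : Prop where
  one : ∀ x, α 1 x = x
  mul : ∀ s t x, α (s * t) x = α s (α t x)
  cont : ∀ s, Continuous (α s)

structure IsContPseudoMetric (X : Type*) [TopologicalSpace X] (ρ : X → X → ℝ) : Prop where
  nonneg : ∀ x y, 0 ≤ ρ x y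
  refl : ∀ x, ρ x x = 0
  symm : ∀ x y, ρ x y = ρ y x
  triangle : ∀ x y z, ρ x z ≤ ρ x y + ρ y z
  cont : Continuous fun p : X × X => ρ p.1 p.2

structure IsCompatMetric (X : Type*) [TopologicalSpace X] (ρ : X → X → ℝ)
    extends IsContPseudoMetric X ρ : Prop where
  eq_of_zero : ∀ x y, ρ x y = 0 → x = y
  ball_mem : ∀ x : X, ∀ U ∈ nhds x, ∃ ε > 0, {y | ρ x y < ε} ⊆ U

structure IsSoficApprox (G : Type*) [Group G] (d : ℕ → ℕ)
    (σ : ∀ i, G → Equiv.Perm (Fin (d i))) : Prop where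
  mul : ∀ s t : G, Tendsto
    (fun i => ((Finset.univ.filter fun a : Fin (d i) => σ i s (σ i t a) = σ i (s * t) a).card : ℝ) / (d i : ℝ))
    atTop (nhds 1)
  sep : ∀ s t : G, s ≠ t → Tendsto
    (fun i => ((Finset.univ.filter fun a : Fin (d i) => σ i s a ≠ σ i t a).card : ℝ) / (d i : ℝ))
    atTop (nhds 1)
  dim_top : Tendsto d atTop atTop

noncomputable def rho2 {X : Type*} (ρ : X → X → ℝ) {d : ℕ} (φ ψ : Fin d → X) : ℝ :=
  Real.sqrt ((1 / (d : ℝ)) * ∑ a, (ρ (φ a) (ψ a)) ^ 2)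

noncomputable def rhoInf {X : Type*} (ρ : X → X → ℝ) {d : ℕ} (φ ψ : Fin d → X) : ℝ :=
  ⨆ a : Fin d, ρ (φ a) (ψ a)

def MapSet {G X : Type*} [Group G] (α : G → X → X) (ρ : X → X → ℝ)
    (F : Finset G) (δ : ℝ) {d : ℕ} (σ : G → Equiv.Perm (Fin d)) : Set (Fin d → X) :=
  {φ | ∀ s ∈ F, rho2 ρ (fun a => α s (φ a)) (fun a => φ (σ s a)) < δ}

noncomputable def Mval {G X : Type*} [Group G] (α : G → X → X) (f : X → ℝ) (ρ : X → X → ℝ)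
    (ε : ℝ) (F : Finset G) (δ : ℝ) {d : ℕ} (σ : G → Equiv.Perm (Fin d))
    (sepd : (Fin d → X) → (Fin d → X) → ℝ) : ℝ :=
  sSup {r : ℝ | ∃ E : Finset (Fin d → X), ↑E ⊆ MapSet α ρ F δ σ ∧
    (∀ φ ∈ E, ∀ ψ ∈ E, φ ≠ ψ → ε ≤ sepd φ ψ) ∧
    r = ∑ φ ∈ E, Real.exp (∑ a, f (φ a))}

noncomputable def PressureInf {G X : Type*} [Group G] (α : G → X → X) (f : X → ℝ)
    (ρ : X → X → ℝ) (d : ℕ → ℕ) (σ : ∀ i, G → Equiv.Perm (Fin (d i))) : EReal :=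
  ⨆ (ε : ℝ) (_ : 0 < ε), ⨅ (F : Finset G) (_ : F.Nonempty), ⨅ (δ : ℝ) (_ : 0 < δ),
    Filter.limsup (fun i =>
      if (MapSet α ρ F δ (σ i)).Nonempty then
        (((Real.log (Mval α f ρ ε F δ (σ i) (rhoInf ρ))) / (d i : ℝ) : ℝ) : EReal)
      else (⊥ : EReal)) atTop

noncomputable def Pressure2 {G X : Type*} [Group G] (α : G → X → X) (f : X → ℝ)
    (ρ : X → X → ℝ) (d : ℕ → ℕ) (σ : ∀ i, G → Equiv.Perm (Fin (d i))) : EReal :=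
  ⨆ (ε : ℝ) (_ : 0 < ε), ⨅ (F : Finset G) (_ : F.Nonempty), ⨅ (δ : ℝ) (_ : 0 < δ),
    Filter.limsup (fun i =>
      if (MapSet α ρ F δ (σ i)).Nonempty then
        (((Real.log (Mval α f ρ ε F δ (σ i) (rho2 ρ))) / (d i : ℝ) : ℝ) : EReal)
      else (⊥ : EReal)) atTop

def MapMuSet {G X : Type*} [Group G] [TopologicalSpace X] [MeasurableSpace X]
    (α : G → X → X) (μ : Measure X) (ρ : X → X → ℝ) (F : Finset G)
    (L : Finset C(X, ℝ)) (δ : ℝ) {d : ℕ} (σ : G → Equiv.Perm (Fin d)) : Set (Fin d → X) :=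
  {φ | φ ∈ MapSet α ρ F δ σ ∧
    ∀ g ∈ L, |(1 / (d : ℝ)) * ∑ j, g (φ j) - ∫ x, g x ∂μ| < δ}

noncomputable def Nval {X : Type*} (ε : ℝ) {d : ℕ} (Y : Set (Fin d → X))
    (sepd : (Fin d → X) → (Fin d → X) → ℝ) : ℝ :=
  sSup {r : ℝ | ∃ E : Finset (Fin d → X), ↑E ⊆ Y ∧
    (∀ φ ∈ E, ∀ ψ ∈ E, φ ≠ ψ → ε ≤ sepd φ ψ) ∧ r = (E.card : ℝ)}

noncomputable def MeasEntropy {G X : Type*} [Group G] [TopologicalSpace X] [MeasurableSpace X]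
    (α : G → X → X) (μ : Measure X) (ρ : X → X → ℝ) (d : ℕ → ℕ)
    (σ : ∀ i, G → Equiv.Perm (Fin (d i))) : EReal :=
  ⨆ (ε : ℝ) (_ : 0 < ε), ⨅ (F : Finset G) (_ : F.Nonempty),
    ⨅ (L : Finset C(X, ℝ)) (_ : L.Nonempty), ⨅ (δ : ℝ) (_ : 0 < δ),
      Filter.limsup (fun i =>
        if (MapMuSet α μ ρ F L δ (σ i)).Nonempty then
          (((Real.log (Nval ε (MapMuSet α μ ρ F L δ (σ i)) (rhoInf ρ))) / (d i : ℝ) : ℝ) : EReal)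
        else (⊥ : EReal)) atTop

def IsInvProb {G X : Type*} [Group G] [MeasurableSpace X]
    (α : G → X → X) (μ : Measure X) : Prop :=
  IsProbabilityMeasure μ ∧ ∀ s : G, Measure.map (α s) μ = μ

noncomputable def Kval {G X : Type*} [Group G] (α : G → X → X) (f : X → ℝ)
    (ρ : X → X → ℝ) (ε : ℝ) (F : Finset G) : ℝ :=
  sSup {r : ℝ | ∃ D : Finset X,
    (∀ x ∈ D, ∀ y ∈ D, x ≠ y → ε ≤ ⨆ s ∈ F, ρ (α s x) (α s y)) ∧
    r = ∑ x ∈ D, Real.exp (∑ s ∈ F, f (α s x))}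

def IsFolnerSeq (G : Type*) [Group G] [DecidableEq G] (Fol : ℕ → Finset G) : Prop :=
  (∀ n, (Fol n).Nonempty) ∧ ∀ s : G,
    Tendsto (fun n =>
      (((((Fol n).image fun t => s * t) \ Fol n) ∪ (Fol n \ ((Fol n).image fun t => s * t))).card : ℝ)
        / ((Fol n).card : ℝ)) atTop (nhds 0)

end Sofic

theorem EReal.le_of_forall_pos_le_add_coe {x y : EReal} (h : ∀ η : ℝ, 0 < η → x ≤ y + η) :
    x ≤ y := by
  refine EReal.le_of_forall_lt_iff_le.1 fun z hyz => ?_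
  induction y using EReal.rec with
  | bot => simp [(by simpa using h 1 one_pos : x = ⊥)]
  | top => exact absurd hyz not_top_lt
  | coe r =>
    have hrz : r < z := EReal.coe_lt_coe_iff.1 hyz
    simpa [← EReal.coe_sub, ← EReal.coe_add] using h (z - r) (by linarith)

theorem EReal.limsup_add_coe_le {ι : Type*} {l : Filter ι} [l.NeBot] (u : ι → EReal) (η : ℝ) :
    limsup (fun i => u i + η) l ≤ limsup u l + η := by
  have h := EReal.limsup_add_le (u := u) (v := fun _ => (η : EReal)) (f := l)
    (.inr (by simp)) (.inr (by simp))
  rwa [limsup_const] at h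

namespace Sofic

theorem sum_sq_le_of_rho2_lt {X : Type*} {ρ : X → X → ℝ} {d : ℕ} {u v : Fin d → X} {δ : ℝ}
    (h : rho2 ρ u v < δ) :
    ∑ a, ρ (u a) (v a) ^ 2 ≤ d * δ ^ 2 := by
  rcases Nat.eq_zero_or_pos d with rfl | hd
  · simp
  have hδ : 0 < δ := (Real.sqrt_nonneg _).trans_lt h
  have hmean := ((Real.sqrt_lt' hδ).1 h).le
  have hd' : (0 : ℝ) < d := Nat.cast_pos.2 hd
  rw [one_div, inv_mul_le_iff₀ hd'] at hmean
  exact hmean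

section Metric

variable {X : Type*} [TopologicalSpace X] [CompactSpace X] {ρ : X → X → ℝ}

theorem IsContPseudoMetric.exists_finset_forall_exists_lt (hρ : IsContPseudoMetric X ρ) {ε : ℝ}
    (hε : 0 < ε) : ∃ T : Finset X, ∀ x, ∃ t ∈ T, ρ t x < ε := by
  obtain ⟨T, hT⟩ := isCompact_univ.elim_finite_subcover (fun t : X => {y | ρ t y < ε})
    (fun t => isOpen_lt (hρ.cont.comp (Continuous.prodMk_right t)) continuous_const)
    (fun x _ => Set.mem_iUnion.2 ⟨x, by simpa [hρ.refl] using hε⟩)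
  exact ⟨T, fun x => by simpa using hT (Set.mem_univ x)⟩

theorem IsContPseudoMetric.exists_card_le_of_rhoInf_separated (hρ : IsContPseudoMetric X ρ)
    {ε : ℝ} (hε : 0 < ε) (d : ℕ) : ∃ N : ℕ, ∀ E : Finset (Fin d → X),
      (∀ φ ∈ E, ∀ ψ ∈ E, φ ≠ ψ → ε ≤ rhoInf ρ φ ψ) → E.card ≤ N := by
  obtain ⟨T, hT⟩ := hρ.exists_finset_forall_exists_lt (half_pos hε)
  choose c hcT hc using hT
  refine ⟨T.card ^ d, fun E hE => ?_⟩
  -- two maps with the same ε/2-net coordinates are ε-close everywhere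
  have hinj : Set.InjOn (fun φ : Fin d → X => fun a => c (φ a)) E := by
    intro φ hφ ψ hψ hcφψ
    by_contra hne
    obtain ⟨a₀, -⟩ := Function.ne_iff.1 hne
    have : Nonempty (Fin d) := ⟨a₀⟩
    obtain ⟨a, ha⟩ := exists_eq_ciSup_of_finite (f := fun a => ρ (φ a) (ψ a))
    have hca : c (φ a) = c (ψ a) := congrFun hcφψ a
    have hφa := hc (φ a)
    have hψa := hc (ψ a)
    have htri := hρ.triangle (φ a) (c (φ a)) (ψ a)
    have hsymm := hρ.symm (φ a) (c (φ a))
    rw [← hca] at hψa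
    have := hE φ hφ ψ hψ hne
    rw [rhoInf, ← ha] at this
    linarith
  calc E.card ≤ (Fintype.piFinset fun _ : Fin d => T).card :=
        Finset.card_le_card_of_injOn _ (fun φ _ => Fintype.mem_piFinset.2 fun a => hcT _) hinj
    _ = T.card ^ d := by simp

theorem IsCompatMetric.exists_pos_abs_sub_lt (hρ : IsCompatMetric X ρ) {g : X → ℝ}
    (hg : Continuous g) {η : ℝ} (hη : 0 < η) :
    ∃ τ > 0, ∀ x y, ρ x y < τ → |g x - g y| < η := by
  set K := {p : X × X | η ≤ |g p.1 - g p.2|}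
  have hK : IsCompact K := (isClosed_le continuous_const
    ((hg.comp continuous_fst).sub (hg.comp continuous_snd)).abs).isCompact
  have hpos : ∀ p ∈ K, 0 < ρ p.1 p.2 := by
    intro p hp
    refine (hρ.nonneg _ _).lt_of_ne fun h0 => ?_
    have hp' : η ≤ |g p.1 - g p.2| := hp
    rw [hρ.eq_of_zero _ _ h0.symm, sub_self, abs_zero] at hp'
    linarith
  obtain ⟨τ, hτ, hτK⟩ := hK.exists_forall_le' hρ.cont.continuousOn hpos
  exact ⟨τ, hτ, fun x y hxy => lt_of_not_ge fun h => (hτK (x, y) h).not_gt hxy⟩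

theorem IsCompatMetric.exists_abs_sub_le_add_mul_sq (hρ : IsCompatMetric X ρ) {g : X → ℝ}
    (hg : Continuous g) {η : ℝ} (hη : 0 < η) :
    ∃ K ≥ 0, ∀ x y, |g x - g y| ≤ η + K * ρ x y ^ 2 := by
  obtain ⟨C, hC0, hC⟩ := (isCompact_range hg).isBounded.exists_pos_norm_le
  have hCg : ∀ x, |g x| ≤ C := fun x => hC _ (Set.mem_range_self x)
  obtain ⟨τ, hτ, hτg⟩ := hρ.exists_pos_abs_sub_lt hg hη
  refine ⟨2 * C / τ ^ 2, by positivity, fun x y => ?_⟩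
  rcases lt_or_ge (ρ x y) τ with hlt | hge
  · have : 0 ≤ 2 * C / τ ^ 2 * ρ x y ^ 2 := by positivity
    linarith [hτg x y hlt]
  · -- far apart points: the crude bound `2 * C` is paid for by `ρ x y ^ 2 ≥ τ ^ 2`
    have hsq : 2 * C ≤ 2 * C / τ ^ 2 * ρ x y ^ 2 := by
      rw [div_mul_eq_mul_div, le_div_iff₀ (by positivity)]
      gcongr
    calc |g x - g y| ≤ |g x| + |g y| := abs_sub _ _
      _ ≤ 2 * C := by linarith [hCg x, hCg y]
      _ ≤ η + 2 * C / τ ^ 2 * ρ x y ^ 2 := by linarith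

theorem IsCompatMetric.exists_sum_abs_sub_le_of_rho2_lt (hρ : IsCompatMetric X ρ) {g : X → ℝ}
    (hg : Continuous g) {η : ℝ} (hη : 0 < η) :
    ∃ δ > 0, ∀ (d : ℕ) (u v : Fin d → X), rho2 ρ u v < δ →
      ∑ a, |g (u a) - g (v a)| ≤ d * η := by
  obtain ⟨K, hK, hgK⟩ := hρ.exists_abs_sub_le_add_mul_sq hg (half_pos hη)
  have hq : 0 < η / (2 * (K + 1)) := by positivity
  refine ⟨Real.sqrt (η / (2 * (K + 1))), Real.sqrt_pos.2 hq, fun d u v huv => ?_⟩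
  have hKδ : K * Real.sqrt (η / (2 * (K + 1))) ^ 2 ≤ η / 2 := by
    rw [Real.sq_sqrt hq.le, mul_div_assoc', div_le_div_iff₀ (by positivity) two_pos]
    nlinarith
  calc ∑ a, |g (u a) - g (v a)| ≤ ∑ a, (η / 2 + K * ρ (u a) (v a) ^ 2) :=
        Finset.sum_le_sum fun a _ => hgK _ _
    _ = d * (η / 2) + K * ∑ a, ρ (u a) (v a) ^ 2 := by
        simp [Finset.sum_add_distrib, Finset.mul_sum]
    _ ≤ d * (η / 2) + K * (d * Real.sqrt (η / (2 * (K + 1))) ^ 2) := by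
        gcongr
        exact sum_sq_le_of_rho2_lt huv
    _ ≤ d * η := by nlinarith [hKδ, (Nat.cast_nonneg d : (0 : ℝ) ≤ d)]

end Metric

section Pressure

variable {G X : Type*} [Group G] {α : G → X → X} {ρ : X → X → ℝ} {ε : ℝ} {d : ℕ}
  {σ : G → Equiv.Perm (Fin d)}

def separatedSums (α : G → X → X) (f : X → ℝ) (ρ : X → X → ℝ) (ε : ℝ) (F : Finset G) (δ : ℝ)
    {d : ℕ} (σ : G → Equiv.Perm (Fin d)) (sepd : (Fin d → X) → (Fin d → X) → ℝ) : Set ℝ :=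
  {r : ℝ | ∃ E : Finset (Fin d → X), ↑E ⊆ MapSet α ρ F δ σ ∧
    (∀ φ ∈ E, ∀ ψ ∈ E, φ ≠ ψ → ε ≤ sepd φ ψ) ∧
    r = ∑ φ ∈ E, Real.exp (∑ a, f (φ a))}

theorem Mval_eq_sSup (α : G → X → X) (f : X → ℝ) (ρ : X → X → ℝ) (ε : ℝ) (F : Finset G) (δ : ℝ)
    (σ : G → Equiv.Perm (Fin d)) (sepd : (Fin d → X) → (Fin d → X) → ℝ) :
    Mval α f ρ ε F δ σ sepd = sSup (separatedSums α f ρ ε F δ σ sepd) :=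
  rfl

theorem bddAbove_separatedSums [TopologicalSpace X] [CompactSpace X]
    (hρ : IsContPseudoMetric X ρ) {f : X → ℝ} (hf : Continuous f) (hε : 0 < ε) (F : Finset G)
    (δ : ℝ) : BddAbove (separatedSums α f ρ ε F δ σ (rhoInf ρ)) := by
  obtain ⟨N, hN⟩ := hρ.exists_card_le_of_rhoInf_separated hε d
  obtain ⟨C, hC⟩ := (isCompact_range hf).bddAbove
  refine ⟨N * Real.exp (d * C), ?_⟩
  rintro r ⟨E, -, hsep, rfl⟩
  calc ∑ φ ∈ E, Real.exp (∑ a, f (φ a)) ≤ ∑ _φ ∈ E, Real.exp (d * C) := by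
        gcongr with φ
        calc ∑ a, f (φ a) ≤ ∑ _a : Fin d, C := by
              gcongr with a; exact hC (Set.mem_range_self _)
          _ = d * C := by simp
    _ = E.card * Real.exp (d * C) := by simp
    _ ≤ N * Real.exp (d * C) := by gcongr; exact_mod_cast hN E hsep

theorem Mval_nonneg (f : X → ℝ) (F : Finset G) (δ : ℝ)
    (sepd : (Fin d → X) → (Fin d → X) → ℝ) : 0 ≤ Mval α f ρ ε F δ σ sepd := by
  rw [Mval_eq_sSup]
  refine Real.sSup_nonneg ?_
  rintro r ⟨E, -, -, rfl⟩
  positivity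

theorem Mval_pos [TopologicalSpace X] [CompactSpace X] (hρ : IsContPseudoMetric X ρ)
    {f : X → ℝ} (hf : Continuous f) (hε : 0 < ε) {F : Finset G} {δ : ℝ}
    (hne : (MapSet α ρ F δ σ).Nonempty) : 0 < Mval α f ρ ε F δ σ (rhoInf ρ) := by
  obtain ⟨φ, hφ⟩ := hne
  have hmem : Real.exp (∑ a, f (φ a)) ∈ separatedSums α f ρ ε F δ σ (rhoInf ρ) :=
    ⟨{φ}, by simpa using hφ, by simp, by simp⟩
  rw [Mval_eq_sSup]
  exact (Real.exp_pos _).trans_le (le_csSup (bddAbove_separatedSums hρ hf hε F δ) hmem)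

theorem Mval_le_exp_mul_Mval {f f' : X → ℝ} {F F' : Finset G} {δ δ' c : ℝ}
    {sepd : (Fin d → X) → (Fin d → X) → ℝ} (hbdd : BddAbove (separatedSums α f ρ ε F δ σ sepd))
    (hsub : MapSet α ρ F' δ' σ ⊆ MapSet α ρ F δ σ)
    (hsum : ∀ φ ∈ MapSet α ρ F' δ' σ, ∑ a, f' (φ a) ≤ ∑ a, f (φ a) + c) :
    Mval α f' ρ ε F' δ' σ sepd ≤ Real.exp c * Mval α f ρ ε F δ σ sepd := by
  rw [Mval_eq_sSup α f']
  refine Real.sSup_le ?_ (mul_nonneg (Real.exp_pos c).le (Mval_nonneg f F δ sepd))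
  rintro r ⟨E, hE, hsep, rfl⟩
  calc ∑ φ ∈ E, Real.exp (∑ a, f' (φ a))
      ≤ ∑ φ ∈ E, Real.exp c * Real.exp (∑ a, f (φ a)) := by
        gcongr with φ hφ
        rw [← Real.exp_add, Real.exp_le_exp, add_comm c]
        exact hsum φ (hE hφ)
    _ ≤ Real.exp c * Mval α f ρ ε F δ σ sepd := by
        rw [← Finset.mul_sum]
        gcongr
        exact le_csSup hbdd ⟨E, hE.trans hsub, hsep, rfl⟩

noncomputable def pressureTerm (α : G → X → X) (f : X → ℝ) (ρ : X → X → ℝ) (ε : ℝ)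
    (F : Finset G) (δ : ℝ) {d : ℕ} (σ : G → Equiv.Perm (Fin d)) : EReal :=
  if (MapSet α ρ F δ σ).Nonempty then
    ((Real.log (Mval α f ρ ε F δ σ (rhoInf ρ)) / d : ℝ) : EReal)
  else ⊥

theorem pressureInf_eq (α : G → X → X) (f : X → ℝ) (ρ : X → X → ℝ) (d : ℕ → ℕ)
    (σ : ∀ i, G → Equiv.Perm (Fin (d i))) :
    PressureInf α f ρ d σ = ⨆ (ε : ℝ) (_ : 0 < ε), ⨅ (F : Finset G) (_ : F.Nonempty),
      ⨅ (δ : ℝ) (_ : 0 < δ), limsup (fun i => pressureTerm α f ρ ε F δ (σ i)) atTop :=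
  rfl

theorem pressureTerm_le_add [TopologicalSpace X] [CompactSpace X] (hρ : IsContPseudoMetric X ρ)
    {f f' : X → ℝ} (hf : Continuous f) (hf' : Continuous f') (hε : 0 < ε) {F F' : Finset G}
    {δ δ' η : ℝ} (hη : 0 < η) (hsub : MapSet α ρ F' δ' σ ⊆ MapSet α ρ F δ σ)
    (hsum : ∀ φ ∈ MapSet α ρ F' δ' σ, ∑ a, f' (φ a) ≤ ∑ a, f (φ a) + d * η) :
    pressureTerm α f' ρ ε F' δ' σ ≤ pressureTerm α f ρ ε F δ σ + η := by
  by_cases hne : (MapSet α ρ F' δ' σ).Nonempty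
  swap
  · simp [pressureTerm, hne]
  have hM' := Mval_pos hρ hf' hε hne
  have hM := Mval_pos hρ hf hε (hne.mono hsub)
  have hlog : Real.log (Mval α f' ρ ε F' δ' σ (rhoInf ρ))
      ≤ d * η + Real.log (Mval α f ρ ε F δ σ (rhoInf ρ)) := by
    rw [← Real.log_exp (d * η), ← Real.log_mul (Real.exp_ne_zero _) hM.ne']
    exact Real.log_le_log hM'
      (Mval_le_exp_mul_Mval (bddAbove_separatedSums hρ hf hε F δ) hsub hsum)
  simp only [pressureTerm, hne, hne.mono hsub, if_true]
  rw [← EReal.coe_add, EReal.coe_le_coe_iff]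
  rcases Nat.eq_zero_or_pos d with hd | hd
  · simp [hd, hη.le]
  · rw [div_add' _ _ _ (Nat.cast_pos.2 hd).ne', div_le_div_iff_of_pos_right (Nat.cast_pos.2 hd)]
    linarith

theorem sum_add_coboundary_le {f g : X → ℝ} {s : G} {F : Finset G} (hs : s ∈ F) {δ η : ℝ}
    (hδ : ∀ u v : Fin d → X, rho2 ρ u v < δ → ∑ a, |g (u a) - g (v a)| ≤ d * η)
    {φ : Fin d → X} (hφ : φ ∈ MapSet α ρ F δ σ) :
    ∑ a, (f (φ a) + g (α s (φ a)) - g (φ a)) ≤ ∑ a, f (φ a) + d * η := by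
  have hperm : ∑ a, g (φ a) = ∑ a, g (φ (σ s a)) := (Equiv.sum_comp (σ s) _).symm
  have hdiff := hδ _ _ (hφ s hs)
  calc ∑ a, (f (φ a) + g (α s (φ a)) - g (φ a))
      = ∑ a, f (φ a) + ∑ a, (g (α s (φ a)) - g (φ (σ s a))) := by
        rw [Finset.sum_sub_distrib, Finset.sum_add_distrib, hperm, Finset.sum_sub_distrib]
        ring
    _ ≤ ∑ a, f (φ a) + d * η := by
        gcongr
        exact (Finset.sum_le_sum fun a _ => le_abs_self _).trans hdiff

end Pressure

theorem pressureInf_add_coboundary_le {G X : Type*} [Group G] [TopologicalSpace X]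
    [CompactSpace X] {α : G → X → X} {d : ℕ → ℕ} {σ : ∀ i, G → Equiv.Perm (Fin (d i))}
    {f g : X → ℝ} (hf : Continuous f) (hg : Continuous g) {s : G} (hαs : Continuous (α s))
    {ρ : X → X → ℝ} (hρ : IsCompatMetric X ρ) :
    PressureInf α (fun x => f x + g (α s x) - g x) ρ d σ ≤ PressureInf α f ρ d σ := by
  have hf' : Continuous fun x => f x + g (α s x) - g x := (hf.add (hg.comp hαs)).sub hg
  rw [pressureInf_eq, pressureInf_eq]
  refine iSup₂_mono fun ε hε => le_iInf₂ fun F _ => le_iInf₂ fun δ hδ => ?_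
  refine EReal.le_of_forall_pos_le_add_coe fun η hη => ?_
  obtain ⟨δ₀, hδ₀, hgδ₀⟩ := hρ.exists_sum_abs_sub_le_of_rho2_lt hg hη
  have hsub : ∀ i, MapSet α ρ (insert s F) (min δ δ₀) (σ i) ⊆ MapSet α ρ F δ (σ i) :=
    fun i φ hφ t ht => (hφ t (Finset.mem_insert_of_mem ht)).trans_le (min_le_left _ _)
  have hterm : ∀ i, pressureTerm α (fun x => f x + g (α s x) - g x) ρ ε (insert s F)
      (min δ δ₀) (σ i) ≤ pressureTerm α f ρ ε F δ (σ i) + η := fun i =>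
    pressureTerm_le_add hρ.toIsContPseudoMetric hf hf' hε hη (hsub i) fun φ hφ =>
      sum_add_coboundary_le (Finset.mem_insert_self s F)
        (fun u v huv => hgδ₀ _ u v (huv.trans_le (min_le_right _ _))) hφ
  calc _ ≤ limsup (fun i => pressureTerm α (fun x => f x + g (α s x) - g x) ρ ε (insert s F)
          (min δ δ₀) (σ i)) atTop :=
        iInf₂_le_of_le _ (Finset.insert_nonempty s F) (iInf₂_le _ (lt_min hδ hδ₀))
    _ ≤ limsup (fun i => pressureTerm α f ρ ε F δ (σ i) + η) atTop :=
        limsup_le_limsup (Eventually.of_forall hterm)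
    _ ≤ _ := EReal.limsup_add_coe_le _ η

theorem stmt17_general {G : Type*} [Group G]
    {X : Type*} [TopologicalSpace X] [CompactSpace X]
    (α : G → X → X) (hα : ContAction G X α)
    (d : ℕ → ℕ) (σ : ∀ i, G → Equiv.Perm (Fin (d i)))
    (f g : X → ℝ) (hf : Continuous f) (hg : Continuous g) (s : G)
    (ρ : X → X → ℝ) (hρ : IsCompatMetric X ρ) :
    PressureInf α (fun x => f x + g (α s x) - g x) ρ d σ = PressureInf α f ρ d σ := by
  refine le_antisymm (pressureInf_add_coboundary_le hf hg (hα.cont s) hρ) ?_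
  calc PressureInf α f ρ d σ
      = PressureInf α (fun x => (f x + g (α s x) - g x) + -g (α s x) - -g x) ρ d σ := by
        congr 1; funext x; ring
    _ ≤ _ := pressureInf_add_coboundary_le ((hf.add (hg.comp (hα.cont s))).sub hg) hg.neg
        (hα.cont s) hρ

theorem stmt17 {G : Type*} [Group G] [Countable G]
    {X : Type*} [TopologicalSpace X] [CompactSpace X] [TopologicalSpace.MetrizableSpace X]
    (α : G → X → X) (hα : ContAction G X α)
    (d : ℕ → ℕ) (σ : ∀ i, G → Equiv.Perm (Fin (d i))) (hσ : IsSoficApprox G d σ)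
    (f g : X → ℝ) (hf : Continuous f) (hg : Continuous g) (s : G)
    (ρ : X → X → ℝ) (hρ : IsCompatMetric X ρ) :
    PressureInf α (fun x => f x + g (α s x) - g x) ρ d σ = PressureInf α f ρ d σ :=
  stmt17_general α hα d σ f g hf hg s ρ hρ

end Sofic
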